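/- arXiv:2312.11684 — 2 statements merged into one kernel-verified Lean document; each statement's English description precedes it below -/
import Mathlib

section
/- Let Γ be a finitely generated infinite simple group of rank n (i.e., n is the minimal size of a generating set). Then d(Γ × Γ) = n + 1 if and only if there is exactly one normal subgroup N of the free group F_n with F_n/N ≅ Γ. -/
open Function

/-- The rank of a group: the least `n` such that it is a quotient of the
free group of rank `n`. -/
noncomputable def groupRank (Γ : Type*) [Group Γ] : ℕ :=
  sInf {n : ℕ | ∃ f : FreeGroup (Fin n) →* Γ, Function.Surjective f}

private lemma exists_surj_of_fg (G : Type*) [Group G] [Group.FG G] :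
    ∃ m, ∃ f : FreeGroup (Fin m) →* G, Function.Surjective f := by
  obtain ⟨S, hS, hfin⟩ := Group.fg_iff.mp ‹Group.FG G›
  haveI := hfin.fintype
  obtain ⟨m, ⟨e⟩⟩ : ∃ m, Nonempty (S ≃ Fin m) := ⟨Fintype.card S, ⟨Fintype.equivFin S⟩⟩
  refine ⟨m, FreeGroup.lift (fun i => ((e.symm i : S) : G)), ?_⟩
  rw [← MonoidHom.range_eq_top, FreeGroup.range_lift_eq_closure, eq_top_iff, ← hS]
  apply Subgroup.closure_mono
  intro x hx
  exact ⟨e ⟨x, hx⟩, by simp⟩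

private lemma surj_mono {G : Type*} [Group G] {m m' : ℕ} (h : m ≤ m')
    (hf : ∃ f : FreeGroup (Fin m) →* G, Surjective f) :
    ∃ f : FreeGroup (Fin m') →* G, Surjective f := by
  obtain ⟨f, hf⟩ := hf
  let σ : FreeGroup (Fin m) →* FreeGroup (Fin m') :=
    FreeGroup.lift (fun i => FreeGroup.of (Fin.castLE h i))
  let π : FreeGroup (Fin m') →* FreeGroup (Fin m) :=
    FreeGroup.lift (fun i => if hi : (i : ℕ) < m then FreeGroup.of ⟨i, hi⟩ else 1)
  have hcomp : π.comp σ = MonoidHom.id _ := by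
    apply FreeGroup.ext_hom
    intro a
    simp [σ, π, a.isLt]
  have hπσ : ∀ x, π (σ x) = x := by
    intro x
    have := congrArg (fun h : FreeGroup (Fin m) →* FreeGroup (Fin m) => h x) hcomp
    simpa using this
  exact ⟨f.comp π, hf.comp (fun x => ⟨σ x, hπσ x⟩)⟩

private lemma grpRank_le_aux {G : Type*} [Group G] {m : ℕ}
    (h : ∃ f : FreeGroup (Fin m) →* G, Surjective f) : groupRank G ≤ m :=
  Nat.sInf_le h

private lemma surj_of_rank_le_aux {G : Type*} [Group G] {m : ℕ}
    (hne : ∃ k, ∃ f : FreeGroup (Fin k) →* G, Surjective f)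
    (h : groupRank G ≤ m) : ∃ f : FreeGroup (Fin m) →* G, Surjective f := by
  have hmem : groupRank G ∈ {n : ℕ | ∃ f : FreeGroup (Fin n) →* G, Surjective f} :=
    Nat.sInf_mem hne
  exact surj_mono h hmem

private lemma top_of_diag_mem {Γ : Type*} [Group Γ] [IsSimpleGroup Γ]
    (H : Subgroup (Γ × Γ)) (hdiag : ∀ a : Γ, (a, a) ∈ H)
    {t : Γ} (ht : t ≠ 1) (htH : ((1 : Γ), t) ∈ H) : H = ⊤ := by
  let K : Subgroup Γ := H.comap (MonoidHom.inr Γ Γ)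
  have hKmem : ∀ c : Γ, c ∈ K ↔ ((1 : Γ), c) ∈ H := fun c => Iff.rfl
  have hK : K.Normal := by
    constructor
    intro c hc g
    rw [hKmem] at hc ⊢
    have := H.mul_mem (H.mul_mem (hdiag g) hc) (H.inv_mem (hdiag g))
    simpa using this
  have hKtop : K = ⊤ := by
    rcases IsSimpleGroup.eq_bot_or_eq_top_of_normal K hK with hb | htp
    · exfalso
      apply ht
      have h1 : t ∈ K := (hKmem t).mpr htH
      rw [hb, Subgroup.mem_bot] at h1
      exact h1
    · exact htp
  rw [eq_top_iff]
  rintro ⟨a, b⟩ -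
  have h1 : ((1 : Γ), a⁻¹ * b) ∈ H := (hKmem _).mp (hKtop ▸ Subgroup.mem_top _)
  have := H.mul_mem (hdiag a) h1
  simpa using this

private lemma prod_surjective {F Γ : Type*} [Group F] [Group Γ] [IsSimpleGroup Γ]
    {f₁ f₂ : F →* Γ} (h₁ : Surjective f₁) (h₂ : Surjective f₂)
    (hne : f₁.ker ≠ f₂.ker) : Surjective (f₁.prod f₂) := by
  set g := f₁.prod f₂ with hg
  have hgapp : ∀ x, g x = (f₁ x, f₂ x) := fun x => rfl
  let K : Subgroup Γ := g.range.comap (MonoidHom.inr Γ Γ)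
  let K' : Subgroup Γ := g.range.comap (MonoidHom.inl Γ Γ)
  have hKmem : ∀ c : Γ, c ∈ K ↔ ∃ x, f₁ x = 1 ∧ f₂ x = c := by
    intro c
    constructor
    · rintro ⟨x, hx⟩
      rw [hgapp, Prod.ext_iff] at hx
      exact ⟨x, hx.1, hx.2⟩
    · rintro ⟨x, hx1, hx2⟩
      exact ⟨x, by rw [hgapp, hx1, hx2]; rfl⟩
  have hK'mem : ∀ c : Γ, c ∈ K' ↔ ∃ x, f₁ x = c ∧ f₂ x = 1 := by
    intro c
    constructor
    · rintro ⟨x, hx⟩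
      rw [hgapp, Prod.ext_iff] at hx
      exact ⟨x, hx.1, hx.2⟩
    · rintro ⟨x, hx1, hx2⟩
      exact ⟨x, by rw [hgapp, hx1, hx2]; rfl⟩
  have hKn : K.Normal := by
    constructor
    intro c hc b
    rw [hKmem] at hc ⊢
    obtain ⟨x, hx1, hx2⟩ := hc
    obtain ⟨y, hy⟩ := h₂ b
    exact ⟨y * x * y⁻¹, by simp [hx1], by simp [hx2, hy]⟩
  have hK'n : K'.Normal := by
    constructor
    intro c hc b
    rw [hK'mem] at hc ⊢
    obtain ⟨y, hy⟩ := h₁ b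
    obtain ⟨x, hx1, hx2⟩ := hc
    exact ⟨y * x * y⁻¹, by simp [hx1, hy], by simp [hx2]⟩
  rcases IsSimpleGroup.eq_bot_or_eq_top_of_normal K hKn with hKb | hKt
  · rcases IsSimpleGroup.eq_bot_or_eq_top_of_normal K' hK'n with hK'b | hK't
    · exfalso
      apply hne
      ext x
      simp only [MonoidHom.mem_ker]
      constructor
      · intro hx
        have : f₂ x ∈ K := (hKmem _).mpr ⟨x, hx, rfl⟩
        rwa [hKb, Subgroup.mem_bot] at this
      · intro hx
        have : f₁ x ∈ K' := (hK'mem _).mpr ⟨x, rfl, hx⟩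
        rwa [hK'b, Subgroup.mem_bot] at this
    · -- K' = ⊤
      rintro ⟨a, b⟩
      obtain ⟨x, hx⟩ := h₂ b
      have : f₁ x⁻¹ * a ∈ K' := hK't ▸ Subgroup.mem_top _
      obtain ⟨z, hz1, hz2⟩ := (hK'mem _).mp this
      refine ⟨x * z, ?_⟩
      rw [hgapp]
      simp [hz1, hz2, hx, mul_assoc]
  · -- K = ⊤
    rintro ⟨a, b⟩
    obtain ⟨x, hx⟩ := h₁ a
    have : (f₂ x)⁻¹ * b ∈ K := hKt ▸ Subgroup.mem_top _
    obtain ⟨z, hz1, hz2⟩ := (hKmem _).mp this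
    refine ⟨x * z, ?_⟩
    rw [hgapp]
    simp [hz1, hz2, hx, mul_assoc]

private lemma exists_surj_prod {Γ : Type*} [Group Γ] [IsSimpleGroup Γ] {n : ℕ}
    {f : FreeGroup (Fin n) →* Γ} (hf : Surjective f) {t : Γ} (ht : t ≠ 1) :
    ∃ g : FreeGroup (Fin (n + 1)) →* Γ × Γ, Surjective g := by
  classical
  let c : Fin (n + 1) → Γ × Γ := fun i =>
    if hi : (i : ℕ) < n then (f (.of ⟨i, hi⟩), f (.of ⟨i, hi⟩)) else (1, t)
  refine ⟨FreeGroup.lift c, ?_⟩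
  set g := FreeGroup.lift c with hgdef
  have hdiag : ∀ a : Γ, (a, a) ∈ g.range := by
    intro a
    obtain ⟨x, rfl⟩ := hf a
    have key : g.comp (FreeGroup.lift (fun i : Fin n => FreeGroup.of i.castSucc))
        = ((MonoidHom.id Γ).prod (MonoidHom.id Γ)).comp f := by
      apply FreeGroup.ext_hom
      intro i
      simp [g, c, i.isLt]
    refine ⟨FreeGroup.lift (fun i : Fin n => FreeGroup.of i.castSucc) x, ?_⟩
    have := congrArg (fun h : FreeGroup (Fin n) →* Γ × Γ => h x) key
    simpa using this
  have hlast : ((1 : Γ), t) ∈ g.range := ⟨FreeGroup.of (Fin.last n), by simp [g, c]⟩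
  have htop : g.range = ⊤ := top_of_diag_mem _ hdiag ht hlast
  rwa [MonoidHom.range_eq_top] at htop

theorem wiegold_observation
    {Γ : Type*} [Group Γ] [Group.FG Γ] [Infinite Γ] [IsSimpleGroup Γ]
    (n : ℕ) (hn : groupRank Γ = n) :
    groupRank (Γ × Γ) = n + 1 ↔
      ∃! N : Subgroup (FreeGroup (Fin n)),
        N.Normal ∧ ∃ f : FreeGroup (Fin n) →* Γ, Function.Surjective f ∧ f.ker = N := by
  obtain ⟨t, ht⟩ := exists_ne (1 : Γ)
  have hnonempty := exists_surj_of_fg Γ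
  have hmemn : ∃ f : FreeGroup (Fin n) →* Γ, Surjective f := by
    have h : ∃ f : FreeGroup (Fin (groupRank Γ)) →* Γ, Surjective f := Nat.sInf_mem hnonempty
    rw [hn] at h
    exact h
  obtain ⟨f₀, hf₀⟩ := hmemn
  have hub : groupRank (Γ × Γ) ≤ n + 1 := grpRank_le_aux (exists_surj_prod hf₀ ht)
  constructor
  · intro h
    refine ⟨f₀.ker, ⟨MonoidHom.normal_ker f₀, f₀, hf₀, rfl⟩, ?_⟩
    rintro N ⟨hNnorm, f, hf, rfl⟩
    by_contra hne'
    have hsurj : Surjective (f.prod f₀) := prod_surjective hf hf₀ hne'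
    have : groupRank (Γ × Γ) ≤ n := grpRank_le_aux ⟨_, hsurj⟩
    omega
  · rintro ⟨N, ⟨hNn, fN, hfN, hker⟩, huniq⟩
    refine le_antisymm hub ?_
    by_contra hlt
    push_neg at hlt
    have hle : groupRank (Γ × Γ) ≤ n := by omega
    obtain ⟨g, hg⟩ := surj_of_rank_le_aux ⟨n + 1, exists_surj_prod hf₀ ht⟩ hle
    have hs1 : Surjective ((MonoidHom.fst Γ Γ).comp g) := Prod.fst_surjective.comp hg
    have hs2 : Surjective ((MonoidHom.snd Γ Γ).comp g) := Prod.snd_surjective.comp hg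
    have h1 : ((MonoidHom.fst Γ Γ).comp g).ker = N :=
      huniq _ ⟨MonoidHom.normal_ker _, _, hs1, rfl⟩
    have h2 : ((MonoidHom.snd Γ Γ).comp g).ker = N :=
      huniq _ ⟨MonoidHom.normal_ker _, _, hs2, rfl⟩
    obtain ⟨x, hx⟩ := hg ((1 : Γ), t)
    have hx1 : x ∈ ((MonoidHom.fst Γ Γ).comp g).ker := by
      rw [MonoidHom.mem_ker, MonoidHom.comp_apply, hx]
      rfl
    rw [h1, ← h2] at hx1
    rw [MonoidHom.mem_ker, MonoidHom.comp_apply, hx] at hx1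
    exact ht hx1
end

section
/- In the space of marked groups G_n, the set of normal subgroups N such that F_n/N is a simple group is a G_δ set. -/
open Pointwise


/-- The product (Tychonoff) topology on `Set (FreeGroup (Fin n)) = 2^{F_n}`,
with each factor `Prop` discrete. -/
def markedSetTopology (n : ℕ) : TopologicalSpace (Set (FreeGroup (Fin n))) :=
  @Pi.topologicalSpace (FreeGroup (Fin n)) (fun _ => Prop) (fun _ => ⊥)

/-- The space of marked groups `𝒢ₙ`: normal subgroups of `Fₙ` with the topology
induced from `2^{Fₙ}`. -/
def markedGroupTopology (n : ℕ) :
    TopologicalSpace {N : Subgroup (FreeGroup (Fin n)) // N.Normal} :=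
  TopologicalSpace.induced (fun N => (N.1 : Set (FreeGroup (Fin n)))) (markedSetTopology n)

instance freeGroupCountable (n : ℕ) : Countable (FreeGroup (Fin n)) :=
  (Quot.mk_surjective (r := FreeGroup.Red.Step)).countable

/-- Characterization of simplicity of `G ⧸ N` in terms of membership conditions in `G`. -/
theorem simple_quotient_iff {G : Type*} [Group G] (N : Subgroup G) [hN : N.Normal] :
    IsSimpleGroup (G ⧸ N) ↔
      (∃ g, g ∉ N) ∧ ∀ g h : G, g ∉ N → h ∉ N →
        ∃ b ∈ Subgroup.normalClosure ({g} : Set G), h * b⁻¹ ∈ N := by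
  constructor
  · intro hs
    constructor
    · by_contra hc
      push_neg at hc
      have : N = ⊤ := by ext x; simpa using hc x
      subst this
      haveI := QuotientGroup.subsingleton_quotient_top (G := G)
      exact not_subsingleton (G ⧸ (⊤ : Subgroup G)) inferInstance
    · intro g h hg hh
      set C := Subgroup.normalClosure ({g} : Set G) with hC
      set K := C ⊔ N with hK
      haveI : C.Normal := Subgroup.normalClosure_normal
      haveI : K.Normal := inferInstance
      set M := K.map (QuotientGroup.mk' N) with hM
      haveI : M.Normal := Subgroup.Normal.map ‹K.Normal› _ (QuotientGroup.mk'_surjective N)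
      have hMtop : M = ⊤ := by
        rcases hs.eq_bot_or_eq_top_of_normal M ‹M.Normal› with hb | ht
        · exfalso
          have hgK : g ∈ K := le_sup_left (a := C) (b := N)
            (Subgroup.subset_normalClosure (Set.mem_singleton g))
          have : QuotientGroup.mk' N g ∈ M := Subgroup.mem_map_of_mem _ hgK
          rw [hb, Subgroup.mem_bot] at this
          exact hg ((QuotientGroup.eq_one_iff g).mp this)
        · exact ht
      have : QuotientGroup.mk' N h ∈ M := hMtop ▸ Subgroup.mem_top _
      rcases Subgroup.mem_map.mp this with ⟨k, hkK, hkh⟩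
      have hm : k⁻¹ * h ∈ N := by
        have := (QuotientGroup.mk'_eq_mk' N (x := k) (y := h)).mp hkh
        rcases this with ⟨z, hz, hzk⟩
        have : k⁻¹ * h = z := by
          rw [← hzk]; group
        rw [this]; exact hz
      -- k ∈ C ⊔ N, N normal, so k = b * a with b ∈ C, a ∈ N
      have hkmem : k ∈ (C : Set G) * (N : Set G) := by
        rw [← Subgroup.mul_normal C N]; exact hkK
      rcases hkmem with ⟨b, hb, a, ha, hba⟩
      refine ⟨b, hb, ?_⟩
      have : h * b⁻¹ = b * (a * (k⁻¹ * h)) * b⁻¹ := by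
        rw [← hba]; group
      rw [this]
      exact hN.conj_mem _ (N.mul_mem ha hm) b
  · rintro ⟨⟨g₀, hg₀⟩, hcond⟩
    haveI : Nontrivial (G ⧸ N) := by
      refine ⟨QuotientGroup.mk g₀, 1, fun hc => hg₀ ?_⟩
      exact (QuotientGroup.eq_one_iff g₀).mp hc
    refine ⟨fun M hMn => ?_⟩
    by_cases hMb : M = ⊥
    · exact Or.inl hMb
    right
    set K := M.comap (QuotientGroup.mk' N) with hK
    haveI : K.Normal := Subgroup.Normal.comap hMn _
    obtain ⟨x, hxM, hx1⟩ : ∃ x ∈ M, x ≠ 1 := by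
      by_contra hc
      push_neg at hc
      exact hMb ((Subgroup.eq_bot_iff_forall M).mpr hc)
    obtain ⟨g, rfl⟩ := QuotientGroup.mk'_surjective N x
    have hgN : g ∉ N := fun hgN => hx1 ((QuotientGroup.eq_one_iff g).mpr hgN)
    have hgK : g ∈ K := hxM
    have hCK : Subgroup.normalClosure ({g} : Set G) ≤ K :=
      Subgroup.normalClosure_le_normal (by simpa using hgK)
    rw [Subgroup.eq_top_iff']
    intro y
    obtain ⟨h, rfl⟩ := QuotientGroup.mk'_surjective N y
    by_cases hhN : h ∈ N
    · have : QuotientGroup.mk' N h = 1 := (QuotientGroup.eq_one_iff h).mpr hhN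
      rw [this]; exact M.one_mem
    · rcases hcond g h hgN hhN with ⟨b, hbC, hhb⟩
      have hbK : b ∈ K := hCK hbC
      have h1 : QuotientGroup.mk' N (h * b⁻¹) = 1 := (QuotientGroup.eq_one_iff _).mpr hhb
      have : QuotientGroup.mk' N h = QuotientGroup.mk' N b := by
        have := congrArg (· * QuotientGroup.mk' N b) h1
        simpa [map_mul, mul_assoc] using this
      rw [this]
      exact hbK

theorem simple_marked_groups_Gdelta (n : ℕ) :
    @IsGδ _ (markedGroupTopology n)
      {N : {N : Subgroup (FreeGroup (Fin n)) // N.Normal} |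
        haveI := N.2; IsSimpleGroup (FreeGroup (Fin n) ⧸ N.1)} := by
  letI : TopologicalSpace Prop := ⊥
  haveI : DiscreteTopology Prop := ⟨rfl⟩
  letI : TopologicalSpace (Set (FreeGroup (Fin n))) := markedSetTopology n
  letI : TopologicalSpace {N : Subgroup (FreeGroup (Fin n)) // N.Normal} :=
    markedGroupTopology n
  set G := FreeGroup (Fin n)
  -- basic clopen sets
  have hcont : ∀ x : G,
      Continuous (fun N : {N : Subgroup G // N.Normal} => ((N.1 : Set G) x : Prop)) := by
    intro x
    exact (continuous_apply x).comp continuous_induced_dom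
  have hopen_mem : ∀ x : G, IsOpen {N : {N : Subgroup G // N.Normal} | x ∈ N.1} := by
    intro x
    exact (hcont x).isOpen_preimage {p : Prop | p} (isOpen_discrete _)
  have hopen_nmem : ∀ x : G, IsOpen {N : {N : Subgroup G // N.Normal} | x ∉ N.1} := by
    intro x
    exact (hcont x).isOpen_preimage {p : Prop | ¬ p} (isOpen_discrete _)
  have hset : {N : {N : Subgroup G // N.Normal} |
        haveI := N.2; IsSimpleGroup (G ⧸ N.1)} =
      (⋃ g : G, {N : {N : Subgroup G // N.Normal} | g ∉ N.1}) ∩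
      ⋂ p : G × G,
        ({N : {N : Subgroup G // N.Normal} | p.1 ∈ N.1} ∪
         {N : {N : Subgroup G // N.Normal} | p.2 ∈ N.1} ∪
         ⋃ b : Subgroup.normalClosure ({p.1} : Set G),
           {N : {N : Subgroup G // N.Normal} | p.2 * (b : G)⁻¹ ∈ N.1}) := by
    ext N
    haveI := N.2
    simp only [Set.mem_setOf_eq, Set.mem_inter_iff, Set.mem_iUnion, Set.mem_iInter,
      Set.mem_union, simple_quotient_iff N.1]
    constructor
    · rintro ⟨⟨g, hg⟩, hcond⟩
      refine ⟨⟨g, hg⟩, fun p => ?_⟩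
      by_cases h1 : p.1 ∈ N.1
      · exact Or.inl (Or.inl h1)
      by_cases h2 : p.2 ∈ N.1
      · exact Or.inl (Or.inr h2)
      rcases hcond p.1 p.2 h1 h2 with ⟨b, hb, hbm⟩
      exact Or.inr ⟨⟨b, hb⟩, hbm⟩
    · rintro ⟨⟨g, hg⟩, hcond⟩
      refine ⟨⟨g, hg⟩, fun g h hgN hhN => ?_⟩
      rcases hcond (g, h) with (h1 | h2) | ⟨b, hb⟩
      · exact absurd h1 hgN
      · exact absurd h2 hhN
      · exact ⟨b, b.2, hb⟩
  rw [hset]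
  refine IsGδ.inter ?_ ?_
  · exact (isOpen_iUnion fun g => hopen_nmem g).isGδ
  · refine IsGδ.iInter fun p => IsOpen.isGδ ?_
    exact ((hopen_mem p.1).union (hopen_mem p.2)).union
      (isOpen_iUnion fun b => hopen_mem _)
end
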